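/- arXiv:2202.04896 — 3 statements merged into one kernel-verified Lean document; each statement's English description precedes it below -/
import Mathlib

section
/- Let p be a prime with p ≡ 3 (mod 4), let K = GaloisField p 2, and let i ∈ K satisfy i² = −1. Let a, b, c, d ∈ ZMod p and set α = (a : K) + (b : K)·i and β = (c : K) + (d : K)·i (coercions via the algebra map ZMod p → K). If α ≠ β, then 2·(α + β)/(α − β) lies in the image of the algebra map ZMod p → K if and only if a·d = b·c. -/
lemma indep_aux (p : ℕ) [Fact p.Prime] (hp : p % 4 = 3)
    (i : GaloisField p 2) (hi : i ^ 2 = -1) (x y : ZMod p)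
    (h : algebraMap (ZMod p) (GaloisField p 2) x + algebraMap (ZMod p) (GaloisField p 2) y * i = 0) :
    x = 0 ∧ y = 0 := by
  set φ := algebraMap (ZMod p) (GaloisField p 2) with hφ
  have hinj : Function.Injective φ := φ.injective
  by_cases hy : y = 0
  · subst hy
    simp only [map_zero, zero_mul, add_zero] at h
    exact ⟨hinj (by simpa using h), rfl⟩
  · exfalso
    have hyK : φ y ≠ 0 := fun h0 => hy (hinj (by simpa using h0))
    have hiK : i = - φ x / φ y := by
      rw [eq_div_iff hyK]
      linear_combination h
    have hx : ((x / y) ^ 2 : ZMod p) = -1 := by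
      apply hinj
      rw [map_pow, map_div₀, map_neg, map_one]
      rw [show φ x / φ y = -i by rw [hiK]; ring]
      simpa using hi
    have hsq : IsSquare (-1 : ZMod p) := ⟨x / y, by rw [← hx]; ring⟩
    rw [ZMod.exists_sq_eq_neg_one_iff] at hsq
    exact hsq hp

/-- the F_p-invariant criterion of Section 3.1:
`A = 2(α + β)/(α − β)` is defined over `F_p` iff `a·d = b·c`. -/
theorem stmt_3 (p : ℕ) [Fact p.Prime] (hp : p % 4 = 3)
    (i : GaloisField p 2) (hi : i ^ 2 = -1) (a b c d : ZMod p)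
    (hαβ : algebraMap (ZMod p) (GaloisField p 2) a + algebraMap (ZMod p) (GaloisField p 2) b * i ≠
      algebraMap (ZMod p) (GaloisField p 2) c + algebraMap (ZMod p) (GaloisField p 2) d * i) :
    (2 * ((algebraMap (ZMod p) (GaloisField p 2) a + algebraMap (ZMod p) (GaloisField p 2) b * i) +
          (algebraMap (ZMod p) (GaloisField p 2) c + algebraMap (ZMod p) (GaloisField p 2) d * i)) /
        ((algebraMap (ZMod p) (GaloisField p 2) a + algebraMap (ZMod p) (GaloisField p 2) b * i) -
          (algebraMap (ZMod p) (GaloisField p 2) c + algebraMap (ZMod p) (GaloisField p 2) d * i))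
        ∈ Set.range (algebraMap (ZMod p) (GaloisField p 2))) ↔ a * d = b * c := by
  set φ := algebraMap (ZMod p) (GaloisField p 2) with hφdef
  have hinj : Function.Injective φ := φ.injective
  have hsub : (φ a + φ b * i) - (φ c + φ d * i) ≠ 0 := sub_ne_zero.mpr hαβ
  have hpodd : p ≠ 2 := by omega
  have h2 : (2 : ZMod p) ≠ 0 := by
    intro h
    have h' : ((2 : ℕ) : ZMod p) = 0 := by exact_mod_cast h
    rw [ZMod.natCast_eq_zero_iff] at h'
    have := Nat.le_of_dvd (by norm_num) h'
    omega
  constructor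
  · rintro ⟨t, ht⟩
    have hnum : 2 * ((φ a + φ b * i) + (φ c + φ d * i)) = φ t * ((φ a + φ b * i) - (φ c + φ d * i)) :=
      (div_eq_iff hsub).mp ht.symm
    have key : φ (2 * (a + c) - t * (a - c)) + φ (2 * (b + d) - t * (b - d)) * i = 0 := by
      simp only [map_sub, map_add, map_mul, map_ofNat]
      linear_combination hnum
    obtain ⟨h1, h2'⟩ := indep_aux p hp i hi _ _ key
    have h4 : (2 * 2 : ZMod p) * (a * d - b * c) = 0 := by
      linear_combination (a - c) * h2' - (b - d) * h1
    rcases mul_eq_zero.mp h4 with h | h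
    · exact absurd h (mul_ne_zero h2 h2)
    · linear_combination h
  · intro had
    have hsuff : ∃ t : ZMod p, t * (a - c) = 2 * (a + c) ∧ t * (b - d) = 2 * (b + d) := by
      by_cases hac : a - c = 0
      · have hac' : a = c := sub_eq_zero.mp hac
        have hbd : b - d ≠ 0 := by
          intro hbd
          exact hαβ (by rw [hac', sub_eq_zero.mp hbd])
        have h0 : a * (d - b) = 0 := by linear_combination had - b * hac'
        have ha0 : a = 0 := by
          rcases mul_eq_zero.mp h0 with h | h
          · exact h
          · exact absurd (by linear_combination -h) hbd
        have hc0 : c = 0 := hac'.symm.trans ha0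
        refine ⟨2 * (b + d) / (b - d), ?_, div_mul_cancel₀ _ hbd⟩
        simp [ha0, hc0]
      · refine ⟨2 * (a + c) / (a - c), div_mul_cancel₀ _ hac, ?_⟩
        field_simp
        linear_combination (-2 : ZMod p) * had
    obtain ⟨t, e1, e2⟩ := hsuff
    refine ⟨t, ?_⟩
    rw [eq_div_iff hsub]
    have E1 := congrArg φ e1
    have E2 := congrArg φ e2
    simp only [map_mul, map_sub, map_add, map_ofNat] at E1 E2
    linear_combination E1 + i * E2
end

section
/- Let p be a prime with p ≡ 3 (mod 4), let K = GaloisField p 2, and let i ∈ K satisfy i² = −1. Let a, b, c, d ∈ ZMod p with (a, c) ≠ (0, 0), set α = (a : K) + (b : K)·i and β = (c : K) + (d : K)·i, and assume α ≠ β and b·c = a·d. Then a ≠ c and 2·(α + β)/(α − β) = ((2·(a + c))/(a − c) : K), i.e. the projective coefficients (α : β) and ((a : K) : (c : K)) represent the same affine Montgomery coefficient. -/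
/-! Writing `α = a + b i` and `β = c + d i`, the cross-multiplied identity
`(α + β)(a - c) = (a + c)(α - β)` reduces to `2 i (a d - b c) = 0`, so it holds whenever `b c = a d`.
Division is legitimate because `a = c` would force `a ≠ 0`, hence `b = d` and `α = β`. -/

theorem add_mul_sub_eq_mul_sub_of_mul_eq_mul {K : Type*} [CommRing K] {a b c d : K} (i : K)
    (h : b * c = a * d) :
    ((a + b * i) + (c + d * i)) * (a - c) = (a + c) * ((a + b * i) - (c + d * i)) := by
  linear_combination (-2 * i) * h

theorem two_mul_add_div_sub_eq_of_mul_eq_mul {K : Type*} [Field K] {a b c d : K} (i : K)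
    (hαβ : a + b * i ≠ c + d * i) (hac : a ≠ c) (h : b * c = a * d) :
    2 * ((a + b * i) + (c + d * i)) / ((a + b * i) - (c + d * i)) = 2 * (a + c) / (a - c) := by
  rw [mul_div_assoc, mul_div_assoc]
  congr 1
  exact (div_eq_div_iff (sub_ne_zero.2 hαβ) (sub_ne_zero.2 hac)).2
    (add_mul_sub_eq_mul_sub_of_mul_eq_mul i h)

theorem ne_of_mul_eq_mul_of_prod_ne {F : Type*} [Field F] {a b c d : F} (hac : (a, c) ≠ (0, 0))
    (h : b * c = a * d) (hne : (a, b) ≠ (c, d)) : a ≠ c := by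
  rintro rfl
  have ha : a ≠ 0 := by rintro rfl; exact hac rfl
  have hbd : b = d := mul_right_cancel₀ ha (by linear_combination h)
  exact hne (by rw [hbd])

theorem stmt_6_general (p : ℕ) [Fact p.Prime]
    (i : GaloisField p 2) (a b c d : ZMod p)
    (hac : (a, c) ≠ (0, 0))
    (hαβ : algebraMap (ZMod p) (GaloisField p 2) a + algebraMap (ZMod p) (GaloisField p 2) b * i ≠
      algebraMap (ZMod p) (GaloisField p 2) c + algebraMap (ZMod p) (GaloisField p 2) d * i)
    (hbcad : b * c = a * d) :
    a ≠ c ∧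
      2 * ((algebraMap (ZMod p) (GaloisField p 2) a + algebraMap (ZMod p) (GaloisField p 2) b * i) +
          (algebraMap (ZMod p) (GaloisField p 2) c + algebraMap (ZMod p) (GaloisField p 2) d * i)) /
        ((algebraMap (ZMod p) (GaloisField p 2) a + algebraMap (ZMod p) (GaloisField p 2) b * i) -
          (algebraMap (ZMod p) (GaloisField p 2) c + algebraMap (ZMod p) (GaloisField p 2) d * i)) =
        algebraMap (ZMod p) (GaloisField p 2) (2 * (a + c) / (a - c)) := by
  set f := algebraMap (ZMod p) (GaloisField p 2)
  have hne : a ≠ c :=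
    ne_of_mul_eq_mul_of_prod_ne hac hbcad (by rintro ⟨rfl, rfl⟩; exact hαβ rfl)
  refine ⟨hne, ?_⟩
  rw [two_mul_add_div_sub_eq_of_mul_eq_mul i hαβ (f.injective.ne hne)
    (by rw [← map_mul, ← map_mul, hbcad])]
  simp only [map_div₀, map_mul, map_add, map_sub, map_ofNat]

/-- Lemma 1 of the paper: if `(a + ib : c + id)` is a projective
coefficient with `bc = ad`, then `(a : c)` represents the same affine Montgomery
coefficient `2(α + β)/(α − β) = 2(a + c)/(a − c)`. -/
theorem stmt_6 (p : ℕ) [Fact p.Prime] (hp : p % 4 = 3)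
    (i : GaloisField p 2) (hi : i ^ 2 = -1) (a b c d : ZMod p)
    (hac : (a, c) ≠ (0, 0))
    (hαβ : algebraMap (ZMod p) (GaloisField p 2) a + algebraMap (ZMod p) (GaloisField p 2) b * i ≠
      algebraMap (ZMod p) (GaloisField p 2) c + algebraMap (ZMod p) (GaloisField p 2) d * i)
    (hbcad : b * c = a * d) :
    a ≠ c ∧
      2 * ((algebraMap (ZMod p) (GaloisField p 2) a + algebraMap (ZMod p) (GaloisField p 2) b * i) +
          (algebraMap (ZMod p) (GaloisField p 2) c + algebraMap (ZMod p) (GaloisField p 2) d * i)) /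
        ((algebraMap (ZMod p) (GaloisField p 2) a + algebraMap (ZMod p) (GaloisField p 2) b * i) -
          (algebraMap (ZMod p) (GaloisField p 2) c + algebraMap (ZMod p) (GaloisField p 2) d * i)) =
        algebraMap (ZMod p) (GaloisField p 2) (2 * (a + c) / (a - c)) :=
  stmt_6_general p i a b c d hac hαβ hbcad
end

section
/- Let p be a prime with p ≡ 3 (mod 4) and let a, b, c, d ∈ ZMod p with a ≠ c and b ≠ d. Then (2·a² − 2·c²)/((a − c)²) = (2·(a² + b²) − 2·(c² + d²))/((a − c)² + (b − d)²) if and only if b·c = a·d. -/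
/-!
Clearing denominators, the two sides differ by `4 (a - c) (b - d) (b c - a d)`, so the equation
holds exactly when `b c = a d`, provided `2`, `a - c`, `b - d` and `(a - c)² + (b - d)²` are
nonzero. In `ZMod p` with `p ≡ 3 (mod 4)` the last one is automatic: `-1` is not a square there.
-/

theorem sq_add_sq_ne_zero_of_not_isSquare_neg_one {F : Type*} [Field F]
    (hF : ¬IsSquare (-1 : F)) {x : F} (y : F) (hx : x ≠ 0) : x ^ 2 + y ^ 2 ≠ 0 := by
  intro h
  refine hF ⟨y / x, ?_⟩
  field_simp
  linear_combination -h

theorem div_sub_sq_eq_div_sub_sq_add_sub_sq_iff {F : Type*} [Field F] (h2 : (2 : F) ≠ 0)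
    {a b c d : F} (hac : a ≠ c) (hbd : b ≠ d) (hden : (a - c) ^ 2 + (b - d) ^ 2 ≠ 0) :
    (2 * a ^ 2 - 2 * c ^ 2) / ((a - c) ^ 2) =
        (2 * (a ^ 2 + b ^ 2) - 2 * (c ^ 2 + d ^ 2)) / ((a - c) ^ 2 + (b - d) ^ 2) ↔
      b * c = a * d := by
  have hac' : a - c ≠ 0 := sub_ne_zero.mpr hac
  have hbd' : b - d ≠ 0 := sub_ne_zero.mpr hbd
  have hfactor : 2 * 2 * (a - c) * (b - d) ≠ 0 := by positivity
  rw [div_eq_div_iff (pow_ne_zero 2 hac') hden]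
  constructor
  · intro h
    exact mul_left_cancel₀ hfactor (by linear_combination h)
  · intro h
    linear_combination (4 * (a - c) * (b - d)) * h

/-- the chain of equivalences in the proof of Lemma 1 of the paper. -/
theorem stmt_8 (p : ℕ) [Fact p.Prime] (hp : p % 4 = 3)
    (a b c d : ZMod p) (hac : a ≠ c) (hbd : b ≠ d) :
    (2 * a ^ 2 - 2 * c ^ 2) / ((a - c) ^ 2) =
        (2 * (a ^ 2 + b ^ 2) - 2 * (c ^ 2 + d ^ 2)) / ((a - c) ^ 2 + (b - d) ^ 2) ↔
      b * c = a * d := by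
  have h2 : (2 : ZMod p) ≠ 0 := Ring.two_ne_zero (by rw [ZMod.ringChar_zmod_n]; omega)
  have hneg : ¬IsSquare (-1 : ZMod p) := fun h => ZMod.exists_sq_eq_neg_one_iff.mp h hp
  exact div_sub_sq_eq_div_sub_sq_add_sub_sq_iff h2 hac hbd
    (sq_add_sq_ne_zero_of_not_isSquare_neg_one hneg _ (sub_ne_zero.mpr hac))
end
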